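/- arXiv:2207.07874 — 2 statements merged into one kernel-verified Lean document; each statement's English description precedes it below -/
import Mathlib

section
/- Fix K ≥ 1, a positive similarity s₀ ∈ ℝ, and negative similarities s₁, …, s_K ∈ ℝ, and define W(τ) = (∑_{j=1}^K exp(s_j/τ)) / (exp(s₀/τ) + ∑_{j=1}^K exp(s_j/τ)) for τ > 0. If s₀ ≥ s_r for every r (a batch of good embeddings), then W is monotone nondecreasing on (0, ∞); if s₀ ≤ s_r for every r (a batch of very poor embeddings), then W is monotone nonincreasing on (0, ∞). -/
private lemma key (x y a b : ℝ) (ha : 0 < a) (hab : a ≤ b) (hxy : x ≤ y) :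
    x / a + y / b ≤ x / b + y / a := by
  have hb : 0 < b := lt_of_lt_of_le ha hab
  rw [div_add_div _ _ (ne_of_gt ha) (ne_of_gt hb), div_add_div _ _ (ne_of_gt hb) (ne_of_gt ha),
    div_le_div_iff₀ (by positivity) (by positivity)]
  nlinarith [mul_nonneg (mul_nonneg (sub_nonneg.2 hxy) (sub_nonneg.2 hab)) (mul_pos ha hb).le]

private lemma cross (K : ℕ) (s₀ : ℝ) (s : Fin K → ℝ) (a b : ℝ)
    (ha : 0 < a) (hab : a ≤ b) (hs : ∀ r, s r ≤ s₀) :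
    (∑ j, Real.exp (s j / a)) * Real.exp (s₀ / b) ≤
      (∑ j, Real.exp (s j / b)) * Real.exp (s₀ / a) := by
  rw [Finset.sum_mul, Finset.sum_mul]
  refine Finset.sum_le_sum fun j _ => ?_
  rw [← Real.exp_add, ← Real.exp_add, Real.exp_le_exp]
  exact key (s j) s₀ a b ha hab (hs j)

private lemma cross' (K : ℕ) (s₀ : ℝ) (s : Fin K → ℝ) (a b : ℝ)
    (ha : 0 < a) (hab : a ≤ b) (hs : ∀ r, s₀ ≤ s r) :
    (∑ j, Real.exp (s j / b)) * Real.exp (s₀ / a) ≤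
      (∑ j, Real.exp (s j / a)) * Real.exp (s₀ / b) := by
  rw [Finset.sum_mul, Finset.sum_mul]
  refine Finset.sum_le_sum fun j _ => ?_
  rw [← Real.exp_add, ← Real.exp_add, Real.exp_le_exp]
  have := key s₀ (s j) a b ha hab (hs j)
  linarith

/-- Monotonicity of the gradient scaling factor `W(τ)` on `(0, ∞)`:
if the positive similarity dominates all negative similarities (good embeddings)
then `W` is monotone nondecreasing; if it is dominated by all of them
(very poor embeddings) then `W` is monotone nonincreasing. -/
theorem gradient_scaling_factor_monotone
    (K : ℕ) (hK : 1 ≤ K) (s₀ : ℝ) (s : Fin K → ℝ) :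
    ((∀ r, s r ≤ s₀) →
      MonotoneOn
        (fun τ : ℝ =>
          (∑ j, Real.exp (s j / τ)) /
            (Real.exp (s₀ / τ) + ∑ j, Real.exp (s j / τ)))
        (Set.Ioi 0)) ∧
    ((∀ r, s₀ ≤ s r) →
      AntitoneOn
        (fun τ : ℝ =>
          (∑ j, Real.exp (s j / τ)) /
            (Real.exp (s₀ / τ) + ∑ j, Real.exp (s j / τ)))
        (Set.Ioi 0)) := by
  have hpos : ∀ τ : ℝ, 0 < Real.exp (s₀ / τ) + ∑ j, Real.exp (s j / τ) := by
    intro τ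
    have : (0:ℝ) ≤ ∑ j : Fin K, Real.exp (s j / τ) :=
      Finset.sum_nonneg fun j _ => (Real.exp_pos _).le
    linarith [Real.exp_pos (s₀ / τ)]
  constructor
  · intro hs a ha b hb hab
    simp only
    rw [div_le_div_iff₀ (hpos a) (hpos b)]
    have := cross K s₀ s a b (Set.mem_Ioi.mp ha) hab hs
    nlinarith
  · intro hs a ha b hb hab
    simp only
    rw [div_le_div_iff₀ (hpos b) (hpos a)]
    have := cross' K s₀ s a b (Set.mem_Ioi.mp ha) hab hs
    nlinarith
end

section
/- Fix K ≥ 1, a positive similarity s₀ ∈ ℝ, and negative similarities s₁, …, s_K ∈ ℝ, and define W(τ) = (∑_{j=1}^K exp(s_j/τ)) / (exp(s₀/τ) + ∑_{j=1}^K exp(s_j/τ)) for τ > 0. Then for every τ > 0, the sign of W'(τ) equals the sign of ∑_{r=1}^K (s₀ - s_r)·exp(s_r/τ); in particular W'(τ) > 0 if and only if ∑_{r=1}^K (s₀ - s_r)·exp(s_r/τ) > 0, and W'(τ) < 0 if and only if ∑_{r=1}^K (s₀ - s_r)·exp(s_r/τ) < 0. -/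
/-!
Writing `E = exp (s₀ / τ)` and `S = ∑ⱼ exp (sⱼ / τ)`, the quotient rule gives
`W' = (S' E - S E') / (E + S)²`, and since `d/dτ exp (a / τ) = -(a / τ²) exp (a / τ)` the
numerator collapses to `(E / τ²) ∑ᵣ (s₀ - sᵣ) exp (sᵣ / τ)`. Hence `W'` is that sum times a
positive factor.
-/

open Real

theorem mul_neg_iff_of_pos_left {c r : ℝ} (hc : 0 < c) : c * r < 0 ↔ r < 0 := by
  simpa only [mul_zero] using mul_lt_mul_iff_right₀ (b := r) (c := 0) hc

theorem Real.sign_mul_of_pos_left {c : ℝ} (hc : 0 < c) (r : ℝ) : sign (c * r) = sign r := by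
  simp only [Real.sign, mul_neg_iff_of_pos_left hc, mul_pos_iff_of_pos_left hc]

theorem sign_eq_and_pos_iff_and_neg_iff_of_eq_pos_mul {d c x : ℝ} (hc : 0 < c) (hd : d = c * x) :
    sign d = sign x ∧ (0 < d ↔ 0 < x) ∧ (d < 0 ↔ x < 0) := by
  subst hd
  exact ⟨Real.sign_mul_of_pos_left hc x, mul_pos_iff_of_pos_left hc, mul_neg_iff_of_pos_left hc⟩

theorem hasDerivAt_exp_div (a : ℝ) {τ : ℝ} (hτ : τ ≠ 0) :
    HasDerivAt (fun x : ℝ => exp (a / x)) (-(a * exp (a / τ)) / τ ^ 2) τ := by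
  have hdiv : HasDerivAt (fun x : ℝ => a / x) (a * -(τ ^ 2)⁻¹) τ := by
    simpa only [div_eq_mul_inv] using (hasDerivAt_inv hτ).const_mul a
  convert hdiv.exp using 1
  field_simp

theorem HasDerivAt.div_add_self {f g : ℝ → ℝ} {f' g' x : ℝ} (hf : HasDerivAt f f' x)
    (hg : HasDerivAt g g' x) (hx : g x + f x ≠ 0) :
    HasDerivAt (fun y => f y / (g y + f y)) ((f' * g x - f x * g') / (g x + f x) ^ 2) x :=
  (hf.div (hg.add hf) hx).congr_deriv (by simp only [Pi.add_apply]; ring)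

theorem hasDerivAt_sum_exp_div_add_sum_exp_div {ι : Type*} [Fintype ι] (s₀ : ℝ) (s : ι → ℝ)
    {τ : ℝ} (hτ : 0 < τ) :
    HasDerivAt (fun x : ℝ => (∑ j, exp (s j / x)) / (exp (s₀ / x) + ∑ j, exp (s j / x)))
      (exp (s₀ / τ) / (τ ^ 2 * (exp (s₀ / τ) + ∑ j, exp (s j / τ)) ^ 2) *
        ∑ r, (s₀ - s r) * exp (s r / τ)) τ := by
  have hS : HasDerivAt (fun x : ℝ => ∑ j, exp (s j / x))
      (∑ j, -(s j * exp (s j / τ)) / τ ^ 2) τ :=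
    HasDerivAt.fun_sum fun j _ => hasDerivAt_exp_div (s j) hτ.ne'
  have hpos : 0 < exp (s₀ / τ) + ∑ j, exp (s j / τ) := by positivity
  convert hS.div_add_self (hasDerivAt_exp_div s₀ hτ.ne') hpos.ne' using 1
  rw [← Finset.sum_div, Finset.sum_neg_distrib]
  simp only [sub_mul, Finset.sum_sub_distrib, ← Finset.mul_sum]
  field_simp
  ring

theorem gradient_scaling_factor_deriv_sign_general
    (K : ℕ) (s₀ : ℝ) (s : Fin K → ℝ) (τ : ℝ) (hτ : 0 < τ) :
    Real.sign
        (deriv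
          (fun τ : ℝ =>
            (∑ j, Real.exp (s j / τ)) /
              (Real.exp (s₀ / τ) + ∑ j, Real.exp (s j / τ))) τ)
      = Real.sign (∑ r, (s₀ - s r) * Real.exp (s r / τ)) ∧
    (0 < deriv
        (fun τ : ℝ =>
          (∑ j, Real.exp (s j / τ)) /
            (Real.exp (s₀ / τ) + ∑ j, Real.exp (s j / τ))) τ
      ↔ 0 < ∑ r, (s₀ - s r) * Real.exp (s r / τ)) ∧
    (deriv
        (fun τ : ℝ =>
          (∑ j, Real.exp (s j / τ)) /
            (Real.exp (s₀ / τ) + ∑ j, Real.exp (s j / τ))) τ < 0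
      ↔ ∑ r, (s₀ - s r) * Real.exp (s r / τ) < 0) := by
  refine sign_eq_and_pos_iff_and_neg_iff_of_eq_pos_mul ?_
    (hasDerivAt_sum_exp_div_add_sum_exp_div s₀ s hτ).deriv
  positivity

/-- For every `τ > 0`, the sign of `W'(τ)` equals the sign of
`∑ᵣ (s₀ - sᵣ)·exp(sᵣ/τ)`; in particular `W'(τ) > 0` iff that sum is positive,
and `W'(τ) < 0` iff it is negative. -/
theorem gradient_scaling_factor_deriv_sign
    (K : ℕ) (hK : 1 ≤ K) (s₀ : ℝ) (s : Fin K → ℝ) (τ : ℝ) (hτ : 0 < τ) :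
    Real.sign
        (deriv
          (fun τ : ℝ =>
            (∑ j, Real.exp (s j / τ)) /
              (Real.exp (s₀ / τ) + ∑ j, Real.exp (s j / τ))) τ)
      = Real.sign (∑ r, (s₀ - s r) * Real.exp (s r / τ)) ∧
    (0 < deriv
        (fun τ : ℝ =>
          (∑ j, Real.exp (s j / τ)) /
            (Real.exp (s₀ / τ) + ∑ j, Real.exp (s j / τ))) τ
      ↔ 0 < ∑ r, (s₀ - s r) * Real.exp (s r / τ)) ∧
    (deriv
        (fun τ : ℝ =>
          (∑ j, Real.exp (s j / τ)) /
            (Real.exp (s₀ / τ) + ∑ j, Real.exp (s j / τ))) τ < 0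
      ↔ ∑ r, (s₀ - s r) * Real.exp (s r / τ) < 0) :=
  gradient_scaling_factor_deriv_sign_general K s₀ s τ hτ
end
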